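/- arXiv:2201.11729 — 3 statements merged into one kernel-verified Lean document; each statement's English description precedes it below -/
import Mathlib

section
/- Let f_Θ : (ℝ^D)^N → ℝ be the function realized by the deep convolutional network with weights Θ = (W^(l,n))_{l∈[L+1], n∈[N/P^{l−1}]}, and let W_H be the end tensor of the hierarchical tensor factorization induced by the perfect P-ary mode tree with the same weight matrices. Then for all x^(1),...,x^(N) ∈ ℝ^D: f_Θ(x^(1),...,x^(N)) = ⟨⊗_{n=1}^N x^(n), W_H⟩, where ⟨·,·⟩ is the Frobenius (Euclidean) inner product of order-N tensors. -/
namespace PAry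

/-! Hierarchical tensor factorization induced by a perfect `P`-ary mode tree over
`[N]`, `N = P^L`, combining adjacent indices, with all mode dimensions equal to `D`,
and the corresponding deep convolutional network.

Levels are numbered `0, ..., L` (Lean) corresponding to the paper's `1, ..., L+1`;
widths are `R 0 = D, R 1, ..., R (L+1) = 1`; the weight matrix of the paper's
`W^(l,n)` is `W (l-1) n`.  Order-`P^l` tensors over a contiguous block of modes are
represented as functions of a full index tuple `Fin N → Fin D` depending only on the
coordinates in the block, so that the tensor product over disjoint blocks is pointwise
multiplication. -/

variable (P L D : ℕ)

/-- Entry accessor for a weight matrix with `ℕ`-indexed rows and columns. -/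
noncomputable def went (R : ℕ → ℕ) (W : ∀ l : ℕ, ℕ → Matrix (Fin (R l)) (Fin (R (l + 1))) ℝ)
    (l n : ℕ) (i : Fin (R l)) (j : ℕ) : ℝ :=
  if h : j < R (l + 1) then W l n i ⟨j, h⟩ else 0

/-- The intermediate tensors `W^(l+1, n+1, r+1)` (paper indexing) of the hierarchical
tensor factorization induced by the perfect `P`-ary mode tree: `itm l n r` is the
order-`P^l` tensor at level `l` (Lean indexing), position `n`, slice `r`. -/
noncomputable def itm (R : ℕ → ℕ) (W : ∀ l : ℕ, ℕ → Matrix (Fin (R l)) (Fin (R (l + 1))) ℝ) :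
    ℕ → ℕ → ℕ → (Fin (P ^ L) → Fin D) → ℝ
  | 0, n, r => fun x =>
      if h : n < P ^ L then
        (if h2 : R 0 = D then went R W 0 n (Fin.cast h2.symm (x ⟨n, h⟩)) r else 0)
      else 0
  | l + 1, n, r => fun x =>
      ∑ r' : Fin (R (l + 1)),
        went R W (l + 1) n r' r *
          ∏ p ∈ Finset.range P, itm R W l (n * P + p) (r' : ℕ) x

/-- The end tensor `W_H` of the hierarchical tensor factorization. -/
noncomputable def endT (R : ℕ → ℕ) (W : ∀ l : ℕ, ℕ → Matrix (Fin (R l)) (Fin (R (l + 1))) ℝ) :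
    (Fin (P ^ L) → Fin D) → ℝ :=
  itm P L D R W L 0 0

/-- The hidden representations of the deep convolutional network: `hid l n` is the
output of the `l`'th hidden layer at position `n` (`hid 0 n` is the input `x^(n)`).
Each hidden layer applies a locally connected linear (`1 × 1` conv) operator followed
by channel-wise product pooling with window size `P`. -/
noncomputable def hid (R : ℕ → ℕ) (W : ∀ l : ℕ, ℕ → Matrix (Fin (R l)) (Fin (R (l + 1))) ℝ)
    (x : Fin (P ^ L) → (Fin D → ℝ)) : ℕ → ℕ → ℕ → ℝ
  | 0, n, r =>
      if h : n < P ^ L ∧ r < D then x ⟨n, h.1⟩ ⟨r, h.2⟩ else 0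
  | l + 1, n, r =>
      ∏ p ∈ Finset.range P,
        ∑ i : Fin (R l), went R W l (n * P + p) i r * hid R W x l (n * P + p) (i : ℕ)

/-- The output of the deep convolutional network: the final linear layer applied to the
output of the last hidden layer. -/
noncomputable def convNet (R : ℕ → ℕ) (W : ∀ l : ℕ, ℕ → Matrix (Fin (R l)) (Fin (R (l + 1))) ℝ)
    (x : Fin (P ^ L) → (Fin D → ℝ)) : ℝ :=
  ∑ i : Fin (R L), went R W L 0 i 0 * hid P L D R W x L 0 (i : ℕ)

end PAry

namespace PAry

lemma itm_congr (P L D : ℕ) (R : ℕ → ℕ)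
    (W : ∀ l : ℕ, ℕ → Matrix (Fin (R l)) (Fin (R (l + 1))) ℝ)
    (l n r : ℕ) (x₁ x₂ : Fin (P ^ L) → Fin D)
    (hx : ∀ k : Fin (P ^ L), n * P ^ l ≤ (k : ℕ) → (k : ℕ) < (n + 1) * P ^ l → x₁ k = x₂ k) :
    itm P L D R W l n r x₁ = itm P L D R W l n r x₂ := by
  induction l generalizing n r with
  | zero =>
    simp only [itm]
    split_ifs with h1 h2
    · rw [hx ⟨n, h1⟩ (by simp) (by simp)]
    · rfl
    · rfl
  | succ l ih =>
    simp only [itm]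
    refine Finset.sum_congr rfl fun r' _ => ?_
    congr 1
    refine Finset.prod_congr rfl fun p hp => ?_
    rw [Finset.mem_range] at hp
    have e : P ^ (l + 1) = P ^ l * P := pow_succ P l
    refine ih _ _ fun k hk1 hk2 => hx k ?_ ?_
    · calc n * P ^ (l + 1) = n * P * P ^ l := by rw [e]; ring
        _ ≤ (n * P + p) * P ^ l := mul_le_mul_left (Nat.le_add_right _ _) _
        _ ≤ (k : ℕ) := hk1
    · calc (k : ℕ) < (n * P + p + 1) * P ^ l := hk2
        _ ≤ ((n + 1) * P) * P ^ l := mul_le_mul_left (by nlinarith) _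
        _ = (n + 1) * P ^ (l + 1) := by rw [e]; ring

/-- Index of the `k`-th coordinate of the `n`-th block of size `P ^ l`. -/
def blockIdx (P L l n : ℕ) (h : (n + 1) * P ^ l ≤ P ^ L) (k : Fin (P ^ l)) : Fin (P ^ L) :=
  ⟨n * P ^ l + (k : ℕ), by
    have hk := k.2
    have e : (n + 1) * P ^ l = n * P ^ l + P ^ l := by ring
    linarith⟩

/-- Extension of an index tuple on a block to a full index tuple. -/
def emb (P L D : ℕ) (hp : 0 < P) (l n : ℕ) (f : Fin (P ^ l) → Fin D) (k : Fin (P ^ L)) :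
    Fin D :=
  f ⟨((k : ℕ) - n * P ^ l) % P ^ l, Nat.mod_lt _ (Nat.pow_pos hp)⟩

/-- Combining a child position and a position within the child block. -/
def comb (P l : ℕ) (p : Fin P) (k : Fin (P ^ l)) : Fin (P ^ (l + 1)) :=
  ⟨(p : ℕ) * P ^ l + (k : ℕ), by
    have e : P ^ (l + 1) = P * P ^ l := by rw [pow_succ]; ring
    have hk := k.2
    calc (p : ℕ) * P ^ l + (k : ℕ) < (p : ℕ) * P ^ l + P ^ l := Nat.add_lt_add_left hk _
      _ = ((p : ℕ) + 1) * P ^ l := by ring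
      _ ≤ P * P ^ l := mul_le_mul_left p.2 _
      _ = P ^ (l + 1) := e.symm⟩

/-- The equivalence `Fin P × Fin (P ^ l) ≃ Fin (P ^ (l + 1))`. -/
def combE (P : ℕ) (hp : 0 < P) (l : ℕ) : Fin P × Fin (P ^ l) ≃ Fin (P ^ (l + 1)) where
  toFun q := comb P l q.1 q.2
  invFun j :=
    (⟨(j : ℕ) / P ^ l, by
        refine (Nat.div_lt_iff_lt_mul (Nat.pow_pos hp)).2 ?_
        have e : P * P ^ l = P ^ (l + 1) := by rw [pow_succ]; ring
        rw [e]
        exact j.2⟩,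
     ⟨(j : ℕ) % P ^ l, Nat.mod_lt _ (Nat.pow_pos hp)⟩)
  left_inv q := by
    obtain ⟨p, k⟩ := q
    have hpl : 0 < P ^ l := Nat.pow_pos hp
    have h1 : ((p : ℕ) * P ^ l + (k : ℕ)) / P ^ l = (p : ℕ) := by
      rw [mul_comm ((p : ℕ)) (P ^ l), Nat.mul_add_div hpl, Nat.div_eq_of_lt k.2, Nat.add_zero]
    have h2 : ((p : ℕ) * P ^ l + (k : ℕ)) % P ^ l = (k : ℕ) := by
      rw [mul_comm ((p : ℕ)) (P ^ l), Nat.mul_add_mod, Nat.mod_eq_of_lt k.2]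
    simp only [comb, Prod.mk.injEq]
    exact ⟨Fin.ext h1, Fin.ext h2⟩
  right_inv j := by
    simp only [comb]
    apply Fin.ext
    show (j : ℕ) / P ^ l * P ^ l + (j : ℕ) % P ^ l = (j : ℕ)
    rw [mul_comm]
    exact Nat.div_add_mod _ _

/-- Splitting an index tuple on a size-`P ^ (l + 1)` block into `P` index tuples on
size-`P ^ l` blocks. -/
def splitEquiv (P D : ℕ) (hp : 0 < P) (l : ℕ) :
    (Fin (P ^ (l + 1)) → Fin D) ≃ (Fin P → Fin (P ^ l) → Fin D) :=
  (Equiv.arrowCongr (combE P hp l) (Equiv.refl (Fin D))).symm.trans (Equiv.curry _ _ _)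

lemma splitEquiv_apply (P D : ℕ) (hp : 0 < P) (l : ℕ) (f : Fin (P ^ (l + 1)) → Fin D)
    (p : Fin P) (k : Fin (P ^ l)) :
    splitEquiv P D hp l f p k = f (comb P l p k) := rfl

lemma key (P L D : ℕ) (R : ℕ → ℕ) (hp : 0 < P) (hR0 : R 0 = D)
    (W : ∀ l : ℕ, ℕ → Matrix (Fin (R l)) (Fin (R (l + 1))) ℝ)
    (x : Fin (P ^ L) → Fin D → ℝ) :
    ∀ l n r (h : (n + 1) * P ^ l ≤ P ^ L),
      (∑ i : Fin (R l), went R W l n i r * hid P L D R W x l n (i : ℕ)) =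
      ∑ f : Fin (P ^ l) → Fin D,
        (∏ k : Fin (P ^ l), x (blockIdx P L l n h k) (f k)) *
          itm P L D R W l n r (emb P L D hp l n f) := by
  subst hR0
  intro l
  induction l with
  | zero =>
    intro n r h
    have h1 : P ^ (0 : ℕ) = 1 := pow_zero P
    have hn : n < P ^ L := by rw [h1, mul_one] at h; omega
    let e : Fin (R 0) ≃ (Fin (P ^ (0 : ℕ)) → Fin (R 0)) :=
      { toFun := fun d _ => d
        invFun := fun f => f ⟨0, Nat.pow_pos hp⟩
        left_inv := fun d => rfl
        right_inv := fun f => by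
          funext k
          have hk : k = ⟨0, Nat.pow_pos hp⟩ := by
            apply Fin.ext
            show (k : ℕ) = 0
            have hk2 : (k : ℕ) < 1 := lt_of_lt_of_eq k.2 h1
            omega
          rw [hk] }
    have hprod : ∀ g : Fin (P ^ (0 : ℕ)) → ℝ, (∏ k, g k) = g ⟨0, Nat.pow_pos hp⟩ := by
      intro g
      refine Finset.prod_eq_single_of_mem _ (Finset.mem_univ _) fun b _ hb => absurd ?_ hb
      apply Fin.ext
      show (b : ℕ) = 0
      have hk2 : (b : ℕ) < 1 := lt_of_lt_of_eq b.2 h1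
      omega
    rw [← Equiv.sum_comp e]
    refine Finset.sum_congr rfl fun i _ => ?_
    rw [hprod fun k => x (blockIdx P L 0 n h k) (e i k)]
    have hhid : hid P L (R 0) R W x 0 n (i : ℕ) = x ⟨n, hn⟩ i := by
      simp only [hid]
      rw [dif_pos ⟨hn, i.2⟩]
    have hitm : itm P L (R 0) R W 0 n r (emb P L (R 0) hp 0 n (e i)) = went R W 0 n i r := by
      simp only [itm]
      rw [dif_pos hn, dif_pos trivial]
      rfl
    rw [hhid, hitm]
    have hx0 : x (blockIdx P L 0 n h ⟨0, Nat.pow_pos hp⟩) (e i ⟨0, Nat.pow_pos hp⟩)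
        = x ⟨n, hn⟩ i := by
      congr 1
      apply Fin.ext
      show n * P ^ (0 : ℕ) + 0 = n
      rw [h1]
      omega
    rw [hx0]
    exact mul_comm _ _
  | succ l ih =>
    intro n r h
    have e : P ^ (l + 1) = P * P ^ l := by rw [pow_succ]; ring
    have hc : ∀ p : Fin P, (n * P + (p : ℕ) + 1) * P ^ l ≤ P ^ L := by
      intro p
      calc (n * P + (p : ℕ) + 1) * P ^ l ≤ ((n + 1) * P) * P ^ l :=
            mul_le_mul_left (by nlinarith [p.2]) _
        _ = (n + 1) * P ^ (l + 1) := by rw [e]; ring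
        _ ≤ P ^ L := h
    have hcrux : ∀ f : Fin (P ^ (l + 1)) → Fin (R 0),
        (∑ i : Fin (R (l + 1)), went R W (l + 1) n i r *
          ∏ p : Fin P,
            ((∏ k : Fin (P ^ l), x (blockIdx P L l (n * P + (p : ℕ)) (hc p) k)
                (splitEquiv P (R 0) hp l f p k)) *
              itm P L (R 0) R W l (n * P + (p : ℕ)) (i : ℕ)
                (emb P L (R 0) hp l (n * P + (p : ℕ)) (splitEquiv P (R 0) hp l f p))))
        = (∏ k : Fin (P ^ (l + 1)), x (blockIdx P L (l + 1) n h k) (f k)) *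
            itm P L (R 0) R W (l + 1) n r (emb P L (R 0) hp (l + 1) n f) := by
      intro f
      have hxprod : (∏ p : Fin P, ∏ k : Fin (P ^ l),
            x (blockIdx P L l (n * P + (p : ℕ)) (hc p) k) (splitEquiv P (R 0) hp l f p k))
          = ∏ k : Fin (P ^ (l + 1)), x (blockIdx P L (l + 1) n h k) (f k) := by
        rw [← Equiv.prod_comp (combE P hp l)
          (fun j => x (blockIdx P L (l + 1) n h j) (f j)), Fintype.prod_prod_type]
        refine Finset.prod_congr rfl fun p _ => Finset.prod_congr rfl fun k _ => ?_
        rw [splitEquiv_apply]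
        congr 1
        apply Fin.ext
        show (n * P + (p : ℕ)) * P ^ l + (k : ℕ) = n * P ^ (l + 1) + ((p : ℕ) * P ^ l + (k : ℕ))
        rw [e]; ring
      have hitm : ∀ (p : Fin P) (i : ℕ),
          itm P L (R 0) R W l (n * P + (p : ℕ)) i
              (emb P L (R 0) hp l (n * P + (p : ℕ)) (splitEquiv P (R 0) hp l f p))
            = itm P L (R 0) R W l (n * P + (p : ℕ)) i (emb P L (R 0) hp (l + 1) n f) := by
        intro p i
        refine itm_congr P L (R 0) R W l (n * P + (p : ℕ)) i _ _ fun k hk1 hk2 => ?_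
        simp only [emb, splitEquiv_apply]
        have h2 : (n * P + (p : ℕ) + 1) * P ^ l = (n * P + (p : ℕ)) * P ^ l + P ^ l := by ring
        rw [h2] at hk2
        have ht : (k : ℕ) - (n * P + (p : ℕ)) * P ^ l < P ^ l := (tsub_lt_iff_left hk1).2 hk2
        have F1 : (n * P + (p : ℕ)) * P ^ l = n * P ^ (l + 1) + (p : ℕ) * P ^ l := by
          rw [e]; ring
        have hk1' : n * P ^ (l + 1) + (p : ℕ) * P ^ l ≤ (k : ℕ) := F1 ▸ hk1
        have g1 : ∀ u v kk : ℕ, u + v ≤ kk → kk - u = v + (kk - (u + v)) := by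
          intro u v kk h'
          omega
        have hlt : (k : ℕ) - n * P ^ (l + 1) < P ^ (l + 1) := by
          rw [g1 _ _ _ hk1']
          calc (p : ℕ) * P ^ l + ((k : ℕ) - (n * P ^ (l + 1) + (p : ℕ) * P ^ l))
              < (p : ℕ) * P ^ l + P ^ l := Nat.add_lt_add_left (by rw [← F1]; exact ht) _
            _ = ((p : ℕ) + 1) * P ^ l := by ring
            _ ≤ P * P ^ l := mul_le_mul_left p.2 _
            _ = P ^ (l + 1) := e.symm
        congr 1
        apply Fin.ext
        show (p : ℕ) * P ^ l + (((k : ℕ) - (n * P + (p : ℕ)) * P ^ l) % P ^ l)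
            = ((k : ℕ) - n * P ^ (l + 1)) % P ^ (l + 1)
        rw [Nat.mod_eq_of_lt ht, Nat.mod_eq_of_lt hlt, g1 _ _ _ hk1', ← F1]
      calc (∑ i : Fin (R (l + 1)), went R W (l + 1) n i r *
            ∏ p : Fin P,
              ((∏ k : Fin (P ^ l), x (blockIdx P L l (n * P + (p : ℕ)) (hc p) k)
                  (splitEquiv P (R 0) hp l f p k)) *
                itm P L (R 0) R W l (n * P + (p : ℕ)) (i : ℕ)
                  (emb P L (R 0) hp l (n * P + (p : ℕ)) (splitEquiv P (R 0) hp l f p))))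
          = (∏ p : Fin P, ∏ k : Fin (P ^ l),
              x (blockIdx P L l (n * P + (p : ℕ)) (hc p) k) (splitEquiv P (R 0) hp l f p k)) *
            ∑ i : Fin (R (l + 1)), went R W (l + 1) n i r *
              ∏ p : Fin P, itm P L (R 0) R W l (n * P + (p : ℕ)) (i : ℕ)
                (emb P L (R 0) hp (l + 1) n f) := by
            rw [Finset.mul_sum]
            refine Finset.sum_congr rfl fun i _ => ?_
            rw [Finset.prod_mul_distrib, Finset.prod_congr rfl fun p _ => hitm p (i : ℕ)]
            ring
        _ = (∏ k : Fin (P ^ (l + 1)), x (blockIdx P L (l + 1) n h k) (f k)) *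
            itm P L (R 0) R W (l + 1) n r (emb P L (R 0) hp (l + 1) n f) := by
            rw [hxprod]
            congr 1
            simp only [itm]
            refine Finset.sum_congr rfl fun i _ => ?_
            congr 1
            exact Fin.prod_univ_eq_prod_range
              (fun p => itm P L (R 0) R W l (n * P + p) (i : ℕ)
                (emb P L (R 0) hp (l + 1) n f)) P
    calc (∑ i : Fin (R (l + 1)), went R W (l + 1) n i r *
            hid P L (R 0) R W x (l + 1) n (i : ℕ))
        = ∑ i : Fin (R (l + 1)), went R W (l + 1) n i r *
            ∏ p : Fin P, ∑ g : Fin (P ^ l) → Fin (R 0),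
              ((∏ k : Fin (P ^ l), x (blockIdx P L l (n * P + (p : ℕ)) (hc p) k) (g k)) *
                itm P L (R 0) R W l (n * P + (p : ℕ)) (i : ℕ)
                  (emb P L (R 0) hp l (n * P + (p : ℕ)) g)) := by
          refine Finset.sum_congr rfl fun i _ => ?_
          congr 1
          show hid P L (R 0) R W x (l + 1) n (i : ℕ) = _
          simp only [hid]
          rw [← Fin.prod_univ_eq_prod_range]
          exact Finset.prod_congr rfl fun p _ => ih (n * P + (p : ℕ)) (i : ℕ) (hc p)
      _ = ∑ G : Fin P → Fin (P ^ l) → Fin (R 0), ∑ i : Fin (R (l + 1)),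
            went R W (l + 1) n i r *
              ∏ p : Fin P,
                ((∏ k : Fin (P ^ l), x (blockIdx P L l (n * P + (p : ℕ)) (hc p) k) (G p k)) *
                  itm P L (R 0) R W l (n * P + (p : ℕ)) (i : ℕ)
                    (emb P L (R 0) hp l (n * P + (p : ℕ)) (G p))) := by
          simp only [Finset.prod_univ_sum, Fintype.piFinset_univ, Finset.mul_sum]
          exact Finset.sum_comm
      _ = ∑ f : Fin (P ^ (l + 1)) → Fin (R 0), ∑ i : Fin (R (l + 1)),
            went R W (l + 1) n i r *
              ∏ p : Fin P,
                ((∏ k : Fin (P ^ l), x (blockIdx P L l (n * P + (p : ℕ)) (hc p) k)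
                    (splitEquiv P (R 0) hp l f p k)) *
                  itm P L (R 0) R W l (n * P + (p : ℕ)) (i : ℕ)
                    (emb P L (R 0) hp l (n * P + (p : ℕ)) (splitEquiv P (R 0) hp l f p))) :=
          (Equiv.sum_comp (splitEquiv P (R 0) hp l)
            (fun G => ∑ i : Fin (R (l + 1)),
              went R W (l + 1) n i r *
                ∏ p : Fin P,
                  ((∏ k : Fin (P ^ l), x (blockIdx P L l (n * P + (p : ℕ)) (hc p) k) (G p k)) *
                    itm P L (R 0) R W l (n * P + (p : ℕ)) (i : ℕ)
                      (emb P L (R 0) hp l (n * P + (p : ℕ)) (G p))))).symm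
      _ = ∑ f : Fin (P ^ (l + 1)) → Fin (R 0),
            (∏ k : Fin (P ^ (l + 1)), x (blockIdx P L (l + 1) n h k) (f k)) *
              itm P L (R 0) R W (l + 1) n r (emb P L (R 0) hp (l + 1) n f) :=
          Finset.sum_congr rfl fun f _ => hcrux f

end PAry

open PAry in
/-- Proposition "htf_cnn" in the paper: the function realized by the
deep convolutional network equals `x ↦ ⟨⊗_{n=1}^N x^(n), W_H⟩`, where `W_H` is the end
tensor of the hierarchical tensor factorization induced by the perfect `P`-ary mode
tree with the same weight matrices. -/
theorem statement16 (P L D : ℕ) (hP : 2 ≤ P)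
    (R : ℕ → ℕ) (hR0 : R 0 = D) (hRtop : R (L + 1) = 1)
    (W : ∀ l : ℕ, ℕ → Matrix (Fin (R l)) (Fin (R (l + 1))) ℝ)
    (x : Fin (P ^ L) → (Fin D → ℝ)) :
    convNet P L D R W x
      = ∑ idx : Fin (P ^ L) → Fin D, (∏ n, x n (idx n)) * endT P L D R W idx := by
  have hp : 0 < P := by omega
  have h1 : (0 + 1) * P ^ L ≤ P ^ L := by simp
  have hk := key P L D R hp hR0 W x L 0 0 h1
  show (∑ i : Fin (R L), went R W L 0 i 0 * hid P L D R W x L 0 (i : ℕ)) = _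
  rw [hk]
  refine Finset.sum_congr rfl fun f _ => ?_
  congr 1
  · refine Finset.prod_congr rfl fun k _ => ?_
    congr 1
    apply Fin.ext
    show 0 * P ^ L + (k : ℕ) = (k : ℕ)
    omega
  · show itm P L D R W L 0 0 (emb P L D hp L 0 f) = itm P L D R W L 0 0 f
    refine itm_congr P L D R W L 0 0 _ _ fun k _ _ => ?_
    simp only [emb]
    congr 1
    apply Fin.ext
    show ((k : ℕ) - 0 * P ^ L) % P ^ L = (k : ℕ)
    rw [Nat.zero_mul, Nat.sub_zero, Nat.mod_eq_of_lt k.2]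
end

section
/- Let W ∈ ℝ^{D_1×⋯×D_N} be a tensor (in the paper, the end tensor of a hierarchical tensor factorization), and define f : ℝ^{D_1}×⋯×ℝ^{D_N} → ℝ by f(x^(1),...,x^(N)) := ⟨⊗_{n=1}^N x^(n), W⟩, where ⊗ is the tensor (outer) product and ⟨·,·⟩ the Frobenius inner product. Then for every subset I ⊆ [N]: rank ⟦W⟧_I = sep(f; I), i.e. the matrix rank of the matricization of W according to I equals the separation rank of f with respect to I. -/
namespace Sep

variable {N : ℕ}

/-- The matricization of an order-`N` tensor with mode dimensions `E` according to the
index set `I` : the matrix whose rows are indexed by the modes in `I` and whose columns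
are indexed by the remaining modes. -/
noncomputable def matricize (E : Fin N → ℕ) (I : Finset (Fin N))
    (A : (∀ n, Fin (E n)) → ℝ) :
    Matrix (∀ i : {n // n ∈ I}, Fin (E i)) (∀ j : {n // n ∉ I}, Fin (E j)) ℝ :=
  fun ρ κ => A fun n => if h : n ∈ I then ρ ⟨n, h⟩ else κ ⟨n, h⟩

variable (D : Fin N → ℕ)

/-- `f` admits a separable representation with `R` summands with respect to `I`:
`f(x) = Σ_{r=1}^R g_r((x^(i))_{i ∈ I}) · g'_r((x^(j))_{j ∉ I})`. -/
def SepRep (f : (∀ n : Fin N, Fin (D n) → ℝ) → ℝ) (I : Finset (Fin N)) (R : ℕ) : Prop :=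
  ∃ (g : Fin R → ((∀ i : {n // n ∈ I}, Fin (D i) → ℝ) → ℝ))
    (g' : Fin R → ((∀ j : {n // n ∉ I}, Fin (D j) → ℝ) → ℝ)),
    ∀ x : ∀ n : Fin N, Fin (D n) → ℝ,
      f x = ∑ r : Fin R, g r (fun i => x i) * g' r (fun j => x j)

/-- The separation rank of `f` with respect to `I` : the minimal number of summands in
a separable representation of `f` (and `⊤ = ∞` if no finite representation exists). -/
noncomputable def sepRank (f : (∀ n : Fin N, Fin (D n) → ℝ) → ℝ) (I : Finset (Fin N)) : ℕ∞ :=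
  sInf {R : ℕ∞ | ∃ k : ℕ, R = (k : ℕ∞) ∧ SepRep D f I k}

end Sep

open Module Matrix

section Aux

/-- Any matrix over `ℝ` admits a decomposition into `rank` many rank-one summands. -/
lemma exists_decomp {m n : Type*} [Fintype m] [Fintype n] (M : Matrix m n ℝ) :
    ∃ (u : Fin M.rank → m → ℝ) (v : Fin M.rank → n → ℝ),
      ∀ ρ κ, M ρ κ = ∑ r, u r ρ * v r κ := by
  set S := Submodule.span ℝ (Set.range Mᵀ) with hS
  have hfin : M.rank = finrank ℝ S := M.rank_eq_finrank_span_cols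
  let b : Basis (Fin M.rank) ℝ S := Module.finBasisOfFinrankEq ℝ S hfin.symm
  have hmem : ∀ κ, Mᵀ κ ∈ S := fun κ => Submodule.subset_span ⟨κ, rfl⟩
  refine ⟨fun r ρ => (b r : m → ℝ) ρ, fun r κ => b.repr ⟨Mᵀ κ, hmem κ⟩ r, ?_⟩
  intro ρ κ
  have h := b.sum_repr ⟨Mᵀ κ, hmem κ⟩
  have h2 := congrArg (fun z : S => (z : m → ℝ) ρ) h
  simp only [Submodule.coe_sum, SetLike.val_smul, Finset.sum_apply, Pi.smul_apply,
    smul_eq_mul] at h2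
  calc M ρ κ = Mᵀ κ ρ := rfl
    _ = ∑ r, b.repr ⟨Mᵀ κ, hmem κ⟩ r * (b r : m → ℝ) ρ := h2.symm
    _ = ∑ r, (b r : m → ℝ) ρ * b.repr ⟨Mᵀ κ, hmem κ⟩ r := by
        simp_rw [mul_comm]

/-- A matrix expressible as a sum of `R` rank-one summands has rank at most `R`. -/
lemma rank_le_of_decomp {m n : Type*} [Fintype m] [Fintype n] (M : Matrix m n ℝ) (R : ℕ)
    (u : Fin R → m → ℝ) (v : Fin R → n → ℝ)
    (h : ∀ ρ κ, M ρ κ = ∑ r, u r ρ * v r κ) : M.rank ≤ R := by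
  have hM : M = (Matrix.of fun ρ r => u r ρ) * (Matrix.of fun r κ => v r κ) := by
    ext ρ κ; rw [Matrix.mul_apply]; exact h ρ κ
  calc M.rank ≤ min ((Matrix.of fun ρ r => u r ρ) : Matrix m (Fin R) ℝ).rank
        ((Matrix.of fun r κ => v r κ) : Matrix (Fin R) n ℝ).rank := by
        rw [hM]; exact Matrix.rank_mul_le _ _
    _ ≤ ((Matrix.of fun ρ r => u r ρ) : Matrix m (Fin R) ℝ).rank := min_le_left _ _
    _ ≤ Fintype.card (Fin R) := Matrix.rank_le_card_width _
    _ = R := Fintype.card_fin R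

variable {N : ℕ} (D : Fin N → ℕ) (I : Finset (Fin N))

/-- Combine an `I`-indexed and an `Iᶜ`-indexed family into a full multi-index. -/
def cb (ρ : ∀ i : {n // n ∈ I}, Fin (D i)) (κ : ∀ j : {n // n ∉ I}, Fin (D j)) :
    ∀ n, Fin (D n) := fun n => if h : n ∈ I then ρ ⟨n, h⟩ else κ ⟨n, h⟩

/-- The standard-basis-like input associated to a multi-index `d`. -/
def bas (d : ∀ n, Fin (D n)) : ∀ n : Fin N, Fin (D n) → ℝ :=
  fun n k => if k = d n then 1 else 0

lemma prod_bas (d idx : ∀ n, Fin (D n)) :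
    (∏ n, bas D d n (idx n)) = if idx = d then 1 else 0 := by
  by_cases h : idx = d
  · simp [h, bas]
  · rw [if_neg h]
    obtain ⟨n, hn⟩ : ∃ n, idx n ≠ d n := by
      by_contra hc
      push_neg at hc
      exact h (funext hc)
    exact Finset.prod_eq_zero (Finset.mem_univ n) (by simp [bas, hn])

lemma f_bas (W : (∀ n, Fin (D n)) → ℝ) (d : ∀ n, Fin (D n)) :
    (∑ idx : ∀ n, Fin (D n), (∏ n, bas D d n (idx n)) * W idx) = W d := by
  simp_rw [prod_bas, ite_mul, one_mul, zero_mul]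
  simp

lemma prod_cb (x : ∀ n : Fin N, Fin (D n) → ℝ) (ρ : ∀ i : {n // n ∈ I}, Fin (D i))
    (κ : ∀ j : {n // n ∉ I}, Fin (D j)) :
    (∏ n, x n (cb D I ρ κ n))
      = (∏ i : {n // n ∈ I}, x i (ρ i)) * ∏ j : {n // n ∉ I}, x j (κ j) := by
  rw [← Fintype.prod_subtype_mul_prod_subtype (fun n => n ∈ I)
    (fun n => x n (cb D I ρ κ n))]
  congr 1
  · exact Finset.prod_congr (by congr!) fun i _ => by simp [cb, dif_pos i.2]
  · exact Finset.prod_congr (by congr!) fun j _ => by simp [cb, dif_neg j.2]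

lemma expand (W : (∀ n, Fin (D n)) → ℝ) (x : ∀ n : Fin N, Fin (D n) → ℝ) :
    (∑ idx : ∀ n, Fin (D n), (∏ n, x n (idx n)) * W idx)
      = ∑ ρ : ∀ i : {n // n ∈ I}, Fin (D i), ∑ κ : ∀ j : {n // n ∉ I}, Fin (D j),
          ((∏ i : {n // n ∈ I}, x i (ρ i)) * ∏ j : {n // n ∉ I}, x j (κ j))
            * W (cb D I ρ κ) := by
  rw [← Equiv.sum_comp (Equiv.piEquivPiSubtypeProd (fun n => n ∈ I)
    (fun n => Fin (D n))).symm (fun idx => (∏ n, x n (idx n)) * W idx),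
    Fintype.sum_prod_type]
  exact Finset.sum_congr rfl fun ρ _ => Finset.sum_congr rfl fun κ _ => by
    rw [show (Equiv.piEquivPiSubtypeProd (fun n => n ∈ I)
      (fun n => Fin (D n))).symm (ρ, κ) = cb D I ρ κ from rfl, prod_cb]

end Aux

open Sep in
/-- Proposition "matrank_eq_seprank" in the paper: for the function
`f(x^(1),...,x^(N)) = ⟨⊗_n x^(n), W⟩` induced by a tensor `W`, the rank of the
matricization of `W` according to `I` equals the separation rank of `f` w.r.t. `I`. -/
theorem statement17 {N : ℕ} (D : Fin N → ℕ) (W : (∀ n, Fin (D n)) → ℝ)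
    (I : Finset (Fin N)) :
    ((matricize D I W).rank : ℕ∞)
      = sepRank D (fun x => ∑ idx : ∀ n, Fin (D n), (∏ n, x n (idx n)) * W idx) I := by
  classical
  have hMcb : ∀ ρ κ, matricize D I W ρ κ = W (cb D I ρ κ) := fun ρ κ => rfl
  apply le_antisymm
  · -- rank is a lower bound for the set of separable representation sizes
    apply le_sInf
    rintro R ⟨k, rfl, g, g', hgg⟩
    refine Nat.cast_le.mpr ?_
    refine rank_le_of_decomp _ k
      (fun r ρ => g r (fun i k' => if k' = ρ i then 1 else 0))
      (fun r κ => g' r (fun j k' => if k' = κ j then 1 else 0)) ?_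
    intro ρ κ
    have h := hgg (bas D (cb D I ρ κ))
    beta_reduce at h
    rw [f_bas] at h
    rw [hMcb, h]
    refine Finset.sum_congr rfl fun r _ => ?_
    congr 1
    · congr 1
      funext i
      funext k'
      simp only [bas, cb, dif_pos i.2]
    · congr 1
      funext j
      funext k'
      simp only [bas, cb, dif_neg j.2]
  · -- a separable representation with `rank` many summands exists
    obtain ⟨u, v, huv⟩ := exists_decomp (matricize D I W)
    refine sInf_le ⟨(matricize D I W).rank, rfl,
      fun r xI => ∑ ρ, (∏ i : {n // n ∈ I}, xI i (ρ i)) * u r ρ,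
      fun r xJ => ∑ κ, (∏ j : {n // n ∉ I}, xJ j (κ j)) * v r κ, ?_⟩
    intro x
    beta_reduce
    rw [expand D I W x]
    simp_rw [← hMcb, huv, Finset.mul_sum]
    calc (∑ ρ, ∑ κ, ∑ r, ((∏ i : {n // n ∈ I}, x i (ρ i)) * ∏ j : {n // n ∉ I}, x j (κ j))
            * (u r ρ * v r κ))
        = ∑ ρ, ∑ r, ∑ κ, ((∏ i : {n // n ∈ I}, x i (ρ i)) * ∏ j : {n // n ∉ I}, x j (κ j))
            * (u r ρ * v r κ) := Finset.sum_congr rfl fun ρ _ => Finset.sum_comm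
      _ = ∑ r, ∑ ρ, ∑ κ, ((∏ i : {n // n ∈ I}, x i (ρ i)) * ∏ j : {n // n ∉ I}, x j (κ j))
            * (u r ρ * v r κ) := Finset.sum_comm
      _ = ∑ r, (∑ ρ, (∏ i : {n // n ∈ I}, x i (ρ i)) * u r ρ)
            * (∑ κ, (∏ j : {n // n ∉ I}, x j (κ j)) * v r κ) := by
          refine Finset.sum_congr rfl fun r _ => ?_
          rw [Finset.sum_mul_sum]
          exact Finset.sum_congr rfl fun ρ _ => Finset.sum_congr rfl fun κ _ => by ring
      _ = ∑ r, ∑ κ, (∑ ρ, (∏ i : {n // n ∈ I}, x i (ρ i)) * u r ρ)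
            * ((∏ j : {n // n ∉ I}, x j (κ j)) * v r κ) :=
          Finset.sum_congr rfl fun r _ => Finset.mul_sum _ _ _
end

section
/- Given f : ℝ^{D_1}×⋯×ℝ^{D_N} → ℝ and any finite grids of inputs (x^(1,h_1) ∈ ℝ^{D_1})_{h_1=1}^{H_1},...,(x^(N,h_N) ∈ ℝ^{D_N})_{h_N=1}^{H_N}, let W ∈ ℝ^{H_1×⋯×H_N} be the grid tensor defined by W_{h_1,...,h_N} := f(x^(1,h_1),...,x^(N,h_N)) for all (h_1,...,h_N) ∈ [H_1]×⋯×[H_N]. Then for any I ⊆ [N]: rank ⟦W⟧_I ≤ sep(f; I), i.e. the matrix rank of the matricization of the grid tensor according to I is at most the separation rank of f with respect to I. -/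
open Sep in
/-- Lemma "grid_tensor_mat_rank_ub_by_sep_rank" in the paper: the
rank of the matricization according to `I` of any grid tensor of `f` is at most the
separation rank of `f` with respect to `I`. -/
theorem statement18 {N : ℕ} (D : Fin N → ℕ) (f : (∀ n : Fin N, Fin (D n) → ℝ) → ℝ)
    (H : Fin N → ℕ) (x : ∀ n : Fin N, Fin (H n) → (Fin (D n) → ℝ))
    (I : Finset (Fin N)) :
    ((matricize H I (fun h : ∀ n, Fin (H n) => f fun n => x n (h n))).rank : ℕ∞)
      ≤ sepRank D f I := by
  refine le_sInf ?_
  rintro R ⟨k, rfl, g, g', hf⟩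
  rw [Nat.cast_le]
  set P : Matrix (∀ i : {n // n ∈ I}, Fin (H i)) (Fin k) ℝ :=
    fun ρ r => g r (fun i => x i (ρ i)) with hP
  set Q : Matrix (Fin k) (∀ j : {n // n ∉ I}, Fin (H j)) ℝ :=
    fun r κ => g' r (fun j => x j (κ j)) with hQ
  have hM : matricize H I (fun h : ∀ n, Fin (H n) => f fun n => x n (h n)) = P * Q := by
    ext ρ κ
    simp only [matricize, Matrix.mul_apply, hP, hQ]
    rw [hf]
    refine Finset.sum_congr rfl fun r _ => ?_
    congr 1
    · congr 1; funext i; rw [dif_pos i.2]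
    · congr 1; funext j; rw [dif_neg j.2]
  rw [hM]
  exact (Matrix.rank_mul_le_right P Q).trans
    ((Matrix.rank_le_card_height Q).trans (by simp))
end
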